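/- arXiv:1603.03892 — 2 statements merged into one kernel-verified Lean document; each statement's English description precedes it below -/
import Mathlib

section
/- Let (G, τ) be a locally quasi-convex Hausdorff group topology of finite exponent that is not precompact. Then the dual group (G, τ)^ of continuous characters has cardinality at least the continuum 𝔠. -/
open scoped Topology
open Filter

noncomputable section

abbrev Circle1 : Type := AddCircle (1 : ℝ)

def Tpos : Set Circle1 := (fun r : ℝ => (r : Circle1)) '' Set.Icc (-(1/4) : ℝ) (1/4)

variable {G : Type*}

def IsChar [AddCommGroup G] (τ : TopologicalSpace G) (φ : G →+ Circle1) : Prop :=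
  @Continuous G Circle1 τ _ φ

def QuasiConvex [AddCommGroup G] (τ : TopologicalSpace G) (M : Set G) : Prop :=
  ∀ x ∉ M, ∃ φ : G →+ Circle1, IsChar τ φ ∧ (∀ y ∈ M, φ y ∈ Tpos) ∧ φ x ∉ Tpos

def LocallyQuasiConvex [AddCommGroup G] (τ : TopologicalSpace G) : Prop :=
  ∀ U ∈ @nhds G τ 0, ∃ M ∈ @nhds G τ 0, QuasiConvex τ M ∧ M ⊆ U

def Compatible [AddCommGroup G] (τ τ' : TopologicalSpace G) : Prop :=
  ∀ φ : G →+ Circle1, IsChar τ φ ↔ IsChar τ' φ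

def IsMackey [AddCommGroup G] (τ : TopologicalSpace G) : Prop :=
  @IsTopologicalAddGroup G τ _ ∧ LocallyQuasiConvex τ ∧
    ∀ τ' : TopologicalSpace G, @IsTopologicalAddGroup G τ' _ →
      LocallyQuasiConvex τ' → Compatible τ τ' → τ ≤ τ'

def BoundedGroup (G : Type*) [AddCommGroup G] : Prop :=
  ∃ m : ℕ, 0 < m ∧ ∀ x : G, m • x = 0

def Precompact [AddCommGroup G] (τ : TopologicalSpace G) : Prop :=
  ∀ U ∈ @nhds G τ 0, ∃ F : Finset G, ∀ x : G, ∃ f ∈ F, x - f ∈ U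

def LinearTop [AddCommGroup G] (τ : TopologicalSpace G) : Prop :=
  ∀ U ∈ @nhds G τ 0, ∃ H : AddSubgroup G, @IsOpen G τ (H : Set G) ∧ (H : Set G) ⊆ U

def DuallyClosed [AddCommGroup G] (τ : TopologicalSpace G) (H : AddSubgroup G) : Prop :=
  ∀ x : G, x ∉ H → ∃ φ : G →+ Circle1, IsChar τ φ ∧ (∀ h ∈ H, φ h = 0) ∧ φ x ≠ 0

def WeakTop [AddCommGroup G] (τ : TopologicalSpace G) : TopologicalSpace G :=
  ⨅ φ : {φ : G →+ Circle1 // IsChar τ φ}, TopologicalSpace.induced φ.1 inferInstance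

/-!
If `G` has exponent `m` and `M` is a quasi-convex neighbourhood of `0`, then `M` contains the
subgroup of elements killed by every continuous character mapping `M` into `Tpos`, and this
subgroup is a neighbourhood of `0`: if `k • x ∈ M` for all `k < m`, such a character maps all
multiples of `x` into `Tpos`, and the only such point of the circle is `0`. Hence `τ` is linear,
and as it is not precompact some open subgroup `H` has infinite index. Characters of the discrete
group `G ⧸ H` are continuous on `G`. Finally an infinite group of finite exponent contains an
infinite `𝔽_p`-vector space `V` for some prime `p`; its `𝔽_p`-valued functionals already number
at least `𝔠`, and they extend to characters of the whole group since `ℝ/ℤ` is divisible.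
-/

lemma mem_Tpos_iff_norm_le {c : Circle1} : c ∈ Tpos ↔ ‖c‖ ≤ 1 / 4 := by
  constructor
  · rintro ⟨r, hr, rfl⟩
    have hr' : |r| ≤ 1 / 4 := abs_le.mpr hr
    rwa [(AddCircle.norm_coe_eq_abs_iff _ one_ne_zero).mpr (by norm_num; linarith)]
  · intro hc
    obtain ⟨x, rfl⟩ := QuotientAddGroup.mk_surjective c
    refine ⟨x - round x, ?_, ?_⟩
    · have : ‖((x : ℝ) : Circle1)‖ = |x - round x| := UnitAddCircle.norm_eq
      exact abs_le.mp (this ▸ hc)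
    · simp

lemma norm_two_nsmul_of_mem_Tpos {c : Circle1} (hc : c ∈ Tpos) : ‖2 • c‖ = 2 * ‖c‖ := by
  obtain ⟨r, hr, rfl⟩ := hc
  have hr' : |r| ≤ 1 / 4 := abs_le.mpr hr
  rw [← AddCircle.coe_nsmul, nsmul_eq_mul, Nat.cast_ofNat,
    (AddCircle.norm_coe_eq_abs_iff _ one_ne_zero).mpr (by rw [abs_mul]; norm_num; linarith),
    (AddCircle.norm_coe_eq_abs_iff _ one_ne_zero).mpr (by norm_num; linarith), abs_mul, abs_two]

lemma eq_zero_of_forall_nsmul_mem_Tpos {c : Circle1} (h : ∀ k : ℕ, k • c ∈ Tpos) : c = 0 := by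
  have hpow : ∀ n : ℕ, ‖(2 ^ n) • c‖ = 2 ^ n * ‖c‖ := by
    intro n
    induction n with
    | zero => simp
    | succ n ih => rw [pow_succ, mul_nsmul, norm_two_nsmul_of_mem_Tpos (h _), ih, pow_succ]; ring
  by_contra hc
  have hpos : 0 < ‖c‖ := norm_pos_iff.mpr hc
  obtain ⟨n, hn⟩ := pow_unbounded_of_one_lt (1 / (4 * ‖c‖)) (one_lt_two : (1 : ℝ) < 2)
  have := mem_Tpos_iff_norm_le.mp (h (2 ^ n))
  rw [hpow] at this
  rw [div_lt_iff₀ (by positivity)] at hn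
  linarith

def polarKer [AddCommGroup G] (τ : TopologicalSpace G) (M : Set G) : AddSubgroup G :=
  ⨅ (ψ : G →+ Circle1) (_ : IsChar τ ψ ∧ ∀ y ∈ M, ψ y ∈ Tpos), ψ.ker

section polarKer

variable [AddCommGroup G] {τ : TopologicalSpace G} {M : Set G}

lemma mem_polarKer_iff {x : G} :
    x ∈ polarKer τ M ↔ ∀ ψ : G →+ Circle1, IsChar τ ψ → (∀ y ∈ M, ψ y ∈ Tpos) → ψ x = 0 := by
  simp [polarKer, AddSubgroup.mem_iInf, AddMonoidHom.mem_ker]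

lemma QuasiConvex.polarKer_subset (hM : QuasiConvex τ M) : (polarKer τ M : Set G) ⊆ M := by
  intro x hx
  by_contra hxM
  obtain ⟨ψ, hψ, hψM, hψx⟩ := hM x hxM
  exact hψx (mem_polarKer_iff.mp hx ψ hψ hψM ▸ mem_Tpos_iff_norm_le.mpr (by norm_num))

lemma mem_polarKer_of_forall_nsmul_mem {x : G} (hx : ∀ k : ℕ, k • x ∈ M) : x ∈ polarKer τ M :=
  mem_polarKer_iff.mpr fun ψ _ hψM ↦
    eq_zero_of_forall_nsmul_mem_Tpos fun k ↦ map_nsmul ψ k x ▸ hψM _ (hx k)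

end polarKer

lemma BoundedGroup.setOf_forall_nsmul_mem_mem_nhds [AddCommGroup G] [TopologicalSpace G]
    [IsTopologicalAddGroup G] (hG : BoundedGroup G) {M : Set G} (hM : M ∈ 𝓝 0) :
    {x : G | ∀ k : ℕ, k • x ∈ M} ∈ 𝓝 0 := by
  obtain ⟨m, hm, hmG⟩ := hG
  have hk : ∀ k : ℕ, {x : G | k • x ∈ M} ∈ 𝓝 0 := fun k ↦
    (continuous_nsmul k).continuousAt.preimage_mem_nhds (by simpa using hM)
  refine mem_of_superset ((Finset.range m).iInter_mem_sets.mpr fun k _ ↦ hk k) fun x hx k ↦ ?_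
  have hmod : k • x = (k % m) • x := by
    conv_lhs => rw [← Nat.div_add_mod k m, add_nsmul, mul_nsmul, hmG, smul_zero, zero_add]
  simp only [Set.mem_iInter, Finset.mem_range] at hx
  exact hmod ▸ hx _ (Nat.mod_lt k hm)

lemma LocallyQuasiConvex.linearTop [AddCommGroup G] {τ : TopologicalSpace G}
    (htg : @IsTopologicalAddGroup G τ _) (hG : BoundedGroup G) (hlqc : LocallyQuasiConvex τ) :
    LinearTop τ := by
  let _ := τ
  intro U hU
  obtain ⟨M, hM, hMqc, hMU⟩ := hlqc U hU
  have hnhds : (polarKer τ M : Set G) ∈ 𝓝 0 :=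
    mem_of_superset (hG.setOf_forall_nsmul_mem_mem_nhds hM)
      fun _ hx ↦ mem_polarKer_of_forall_nsmul_mem hx
  exact ⟨polarKer τ M, AddSubgroup.isOpen_of_mem_nhds _ hnhds, hMqc.polarKer_subset.trans hMU⟩

lemma BoundedGroup.quotient [AddCommGroup G] (hG : BoundedGroup G) (H : AddSubgroup G) :
    BoundedGroup (G ⧸ H) := by
  obtain ⟨m, hm, hmG⟩ := hG
  refine ⟨m, hm, fun q ↦ ?_⟩
  induction q using QuotientAddGroup.induction_on with
  | H x => rw [← QuotientAddGroup.mk_nsmul, hmG, QuotientAddGroup.mk_zero]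

lemma LinearTop.exists_isOpen_infinite_quotient [AddCommGroup G] {τ : TopologicalSpace G}
    (hlin : LinearTop τ) (hnp : ¬ Precompact τ) :
    ∃ H : AddSubgroup G, IsOpen[τ] (H : Set G) ∧ Infinite (G ⧸ H) := by
  classical
  rw [Precompact] at hnp
  push Not at hnp
  obtain ⟨U, hU, hcover⟩ := hnp
  obtain ⟨H, hHopen, hHU⟩ := hlin U hU
  refine ⟨H, hHopen, not_finite_iff_infinite.mp fun _ ↦ ?_⟩
  have := Fintype.ofFinite (G ⧸ H)
  obtain ⟨x, hx⟩ := hcover ((Finset.univ : Finset (G ⧸ H)).image Quotient.out)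
  refine hx (x : G ⧸ H).out (Finset.mem_image_of_mem _ (Finset.mem_univ _)) (hHU ?_)
  rw [SetLike.mem_coe, ← QuotientAddGroup.eq_zero_iff, QuotientAddGroup.mk_sub,
    QuotientAddGroup.out_eq', sub_self]

open Cardinal

universe u v

lemma exists_prime_infinite_ker_nsmul {A : Type*} [AddCommGroup A] [Infinite A] {m : ℕ}
    (hm : 0 < m) (hmA : ∀ x : A, m • x = 0) :
    ∃ p : ℕ, p.Prime ∧ Infinite (DistribSMul.toAddMonoidHom A p).ker := by
  induction m using Nat.strong_induction_on generalizing A with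
  | _ m ih =>
  have hm1 : m ≠ 1 := by
    rintro rfl
    exact not_subsingleton A ⟨fun x y ↦ by rw [← one_nsmul x, ← one_nsmul y, hmA, hmA]⟩
  set p := m.minFac
  have hp : p.Prime := Nat.minFac_prime hm1
  have hpm : p ∣ m := Nat.minFac_dvd m
  by_cases hK : Infinite (DistribSMul.toAddMonoidHom A p).ker
  · exact ⟨p, hp, hK⟩
  set f := DistribSMul.toAddMonoidHom A p
  -- `p • A ≃ A ⧸ A[p]` is then infinite, and has exponent `m / p`.
  have hR : Infinite f.range := by
    rw [not_infinite_iff_finite] at hK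
    by_contra hR
    rw [not_infinite_iff_finite] at hR
    have := Finite.of_equiv _ (QuotientAddGroup.quotientKerEquivRange f).symm.toEquiv
    have := Finite.of_addSubgroup_quotient f.ker
    exact not_finite A
  have hmR : ∀ y : f.range, (m / p) • y = 0 := by
    rintro ⟨_, x, rfl⟩
    ext
    simp only [f, DistribSMul.toAddMonoidHom_apply, AddSubgroup.coe_nsmul, smul_smul,
      Nat.div_mul_cancel hpm, hmA, ZeroMemClass.coe_zero]
  obtain ⟨q, hq, hRq⟩ := ih (m / p) (Nat.div_lt_self hm hp.one_lt)
    (Nat.div_pos (Nat.minFac_le hm) hp.pos) hmR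
  refine ⟨q, hq, Infinite.of_injective
    (fun y : (DistribSMul.toAddMonoidHom f.range q).ker ↦
      ⟨y.1.1, by simpa using congrArg Subtype.val (AddMonoidHom.mem_ker.mp y.2)⟩)
    fun _ _ h ↦ Subtype.ext (Subtype.ext (Subtype.ext_iff.mp h :))⟩

lemma Module.continuum_le_mk_dual {K : Type u} {V : Type v} [Field K] [AddCommGroup V]
    [Module K V] (h : ℵ₀ ≤ Module.rank K V) : 𝔠 ≤ #(V →ₗ[K] K) := by
  obtain ⟨ι, b⟩ := Module.Free.exists_basis K V
  rw [← b.mk_eq_rank''] at h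
  calc 𝔠 = 2 ^ ℵ₀ := two_power_aleph0.symm
    _ ≤ lift.{v} #K ^ lift.{u} #ι := by
      refine (power_le_power_left two_ne_zero ?_).trans (power_le_power_right ?_)
      · simpa using h
      · simpa using (two_le_iff.mpr ⟨0, 1, zero_ne_one⟩)
    _ = #(V →ₗ[K] K) := by rw [← mk_congr (b.constr K).toEquiv, mk_arrow]

lemma mk_addMonoidHom_le_of_injective {A B : Type u} {D : Type v} [AddCommGroup A]
    [AddCommGroup B] [AddCommGroup D] [DivisibleBy D ℤ] (f : B →+ A) (hf : Function.Injective f) :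
    #(B →+ D) ≤ #(A →+ D) :=
  mk_le_of_surjective (f := fun g : A →+ D ↦ g.comp f) fun g ↦
    (Module.Baer.of_divisible D).extension_property_addMonoidHom f hf g

lemma mk_linearMap_zmod_le_mk_addCircle_dual {p : ℕ} [NeZero p] {V : Type*} [AddCommGroup V]
    [Module (ZMod p) V] : #(V →ₗ[ZMod p] ZMod p) ≤ #(V →+ Circle1) :=
  mk_le_of_injective (f := fun g ↦ ZMod.toAddCircle.comp g.toAddMonoidHom) fun _ _ hgh ↦
    LinearMap.ext fun x ↦ ZMod.toAddCircle_injective p (DFunLike.congr_fun hgh x)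

lemma continuum_le_mk_addCircle_dual_of_module_zmod {p : ℕ} [Fact p.Prime] {V : Type*}
    [AddCommGroup V] [Module (ZMod p) V] [Infinite V] : 𝔠 ≤ #(V →+ Circle1) := by
  have hrank : ℵ₀ ≤ Module.rank (ZMod p) V := by
    by_contra h
    have := Module.rank_lt_aleph0_iff.mp (not_le.mp h)
    have := Module.finite_of_finite (ZMod p) (M := V)
    exact not_finite V
  exact (Module.continuum_le_mk_dual hrank).trans mk_linearMap_zmod_le_mk_addCircle_dual

lemma continuum_le_mk_addCircle_dual {A : Type*} [AddCommGroup A] [Infinite A]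
    (hA : BoundedGroup A) : 𝔠 ≤ #(A →+ Circle1) := by
  obtain ⟨m, hm, hmA⟩ := hA
  obtain ⟨p, hp, hK⟩ := exists_prime_infinite_ker_nsmul hm hmA
  have := Fact.mk hp
  let K := (DistribSMul.toAddMonoidHom A p).ker
  let _ : Module (ZMod p) K := AddCommMonoid.zmodModule fun x ↦ Subtype.ext x.2
  calc 𝔠 ≤ #(K →+ Circle1) := continuum_le_mk_addCircle_dual_of_module_zmod (p := p)
    _ ≤ #(A →+ Circle1) := mk_addMonoidHom_le_of_injective K.subtype Subtype.val_injective

lemma mk_quotient_dual_le_mk_isChar [AddCommGroup G] {τ : TopologicalSpace G}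
    (htg : @IsTopologicalAddGroup G τ _) {H : AddSubgroup G} (hH : IsOpen[τ] (H : Set G)) :
    #(G ⧸ H →+ Circle1) ≤ #{φ : G →+ Circle1 // IsChar τ φ} := by
  let _ := τ
  have := QuotientAddGroup.discreteTopology hH
  refine mk_le_of_injective (f := fun ψ ↦ ⟨ψ.comp (QuotientAddGroup.mk' H),
    (continuous_of_discreteTopology (f := ψ)).comp continuous_quot_mk⟩) fun _ _ h ↦ ?_
  exact (AddMonoidHom.cancel_right (QuotientAddGroup.mk'_surjective H)).mp (Subtype.ext_iff.mp h)

theorem stmt7_general {G : Type*} [AddCommGroup G] (τ : TopologicalSpace G)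
    (htg : @IsTopologicalAddGroup G τ _)
    (hb : BoundedGroup G) (hlqc : LocallyQuasiConvex τ)
    (hnp : ¬ Precompact τ) :
    Cardinal.continuum ≤ Cardinal.mk {φ : G →+ Circle1 // IsChar τ φ} := by
  obtain ⟨H, hHopen, hHinf⟩ := (hlqc.linearTop htg hb).exists_isOpen_infinite_quotient hnp
  exact (continuum_le_mk_addCircle_dual (hb.quotient H)).trans
    (mk_quotient_dual_le_mk_isChar htg hHopen)

theorem stmt7 {G : Type*} [AddCommGroup G] (τ : TopologicalSpace G)
    (htg : @IsTopologicalAddGroup G τ _) (hT2 : @T2Space G τ)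
    (hb : BoundedGroup G) (hlqc : LocallyQuasiConvex τ)
    (hnp : ¬ Precompact τ) :
    Cardinal.continuum ≤ Cardinal.mk {φ : G →+ Circle1 // IsChar τ φ} :=
  stmt7_general τ htg hb hlqc hnp
end
end

section
/- Let (G, τ) be a topological abelian group and H an open subgroup. If τ is the Mackey topology on G (the finest locally quasi-convex topology among those with the same continuous characters), then the induced topology τ|_H is the Mackey topology on H. -/
open scoped Topology
open Filter

noncomputable section

variable {G : Type*}

/-!
Let `ν` be a locally quasi-convex group topology on `H` with the same characters as `τ|_H`, and
let `τ̄` be the group topology on `G` in which `H` is open with topology `ν`. A character of `G` is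
`τ̄`-continuous iff its restriction to `H` is `ν`-continuous, iff it is `τ|_H`-continuous, iff (as
`H` is `τ`-open) it is `τ`-continuous; so `τ̄` is compatible with `τ`. It is also locally
quasi-convex: quasi-convex `ν`-neighbourhoods stay quasi-convex in `G`, because characters of `H`
extend to `G` (`ℝ/ℤ` is divisible) and the characters of the discrete group `G/H` separate its
points with values outside `[-1/4, 1/4]`. Since `τ` is Mackey, `τ ≤ τ̄`, and restricting to `H`
gives `τ|_H ≤ ν`.
-/

theorem zero_mem_Tpos : (0 : Circle1) ∈ Tpos :=
  ⟨0, by norm_num, by norm_num⟩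

theorem neg_mem_Tpos {t : Circle1} (ht : t ∈ Tpos) : -t ∈ Tpos := by
  obtain ⟨s, ⟨hs₁, hs₂⟩, rfl⟩ := ht
  exact ⟨-s, ⟨by linarith, by linarith⟩, AddCircle.coe_neg 1⟩

theorem coe_notMem_Tpos {r : ℝ} (h₁ : 1 / 4 < r) (h₂ : r < 3 / 4) : (r : Circle1) ∉ Tpos := by
  rintro ⟨s, ⟨hs₁, hs₂⟩, hsr⟩
  have hs : s ∈ Set.Ico (-(1 / 4) : ℝ) (-(1 / 4) + 1) := ⟨hs₁, by linarith⟩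
  have hr : r ∈ Set.Ico (-(1 / 4) : ℝ) (-(1 / 4) + 1) := ⟨by linarith, by linarith⟩
  have := (AddCircle.coe_eq_coe_iff_of_mem_Ico hs hr).mp hsr
  linarith

theorem exists_nsmul_coe_notMem_Tpos {r : ℝ} (h₀ : 0 < r) (h₂ : r ≤ 1 / 2) :
    ∃ n : ℕ, n • (r : Circle1) ∉ Tpos := by
  by_cases h₁ : 1 / 4 < r
  · exact ⟨1, by simpa using coe_notMem_Tpos h₁ (by linarith)⟩
  -- the first multiple of `r` beyond `1/4` overshoots it by at most `r ≤ 1/4`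
  set n := ⌊1 / (4 * r)⌋₊ + 1
  have hlt : 1 / (4 * r) < n := by push_cast [n]; exact Nat.lt_floor_add_one _
  have hnr : n * r = ⌊1 / (4 * r)⌋₊ * r + r := by push_cast [n]; ring
  have hfloor : (⌊1 / (4 * r)⌋₊ : ℝ) * r ≤ 1 / 4 := by
    calc (⌊1 / (4 * r)⌋₊ : ℝ) * r ≤ 1 / (4 * r) * r := by gcongr; exact Nat.floor_le (by positivity)
      _ = 1 / 4 := by field_simp
  have hgt : 1 / 4 < n * r := by
    calc 1 / 4 = 1 / (4 * r) * r := by field_simp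
      _ < n * r := by gcongr
  refine ⟨n, ?_⟩
  rw [← AddCircle.coe_nsmul, nsmul_eq_mul]
  exact coe_notMem_Tpos hgt (by linarith)

theorem exists_nsmul_notMem_Tpos {t : Circle1} (ht : t ≠ 0) : ∃ n : ℕ, n • t ∉ Tpos := by
  obtain ⟨r, rfl⟩ := QuotientAddGroup.mk_surjective t
  rw [← AddCircle.coe_fract] at ht ⊢
  have hs₀ : 0 < Int.fract r := (Int.fract_nonneg r).lt_of_ne fun h => ht (by rw [← h]; rfl)
  set s := Int.fract r
  rcases le_or_gt s (1 / 2) with hs | hs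
  · exact exists_nsmul_coe_notMem_Tpos hs₀ hs
  · obtain ⟨n, hn⟩ :=
      exists_nsmul_coe_notMem_Tpos (r := 1 - s) (by linarith [Int.fract_lt_one r]) (by linarith)
    refine ⟨n, fun h => hn ?_⟩
    have : ((1 - s : ℝ) : Circle1) = -(s : Circle1) := by
      rw [AddCircle.coe_sub, AddCircle.coe_period, zero_sub]
    rw [this, smul_neg]
    exact neg_mem_Tpos h

def ratCircleToCircle1 : AddCircle (1 : ℚ) →+ Circle1 :=
  QuotientAddGroup.map _ _ (Rat.castHom ℝ).toAddMonoidHom <| by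
    rintro _ ⟨k, rfl⟩
    exact ⟨k, by simp⟩

theorem ratCircleToCircle1_injective : Function.Injective ratCircleToCircle1 := by
  refine (injective_iff_map_eq_zero _).mpr fun x hx => ?_
  induction x using QuotientAddGroup.induction_on with
  | H q =>
    obtain ⟨n, hn⟩ := (AddCircle.coe_eq_zero_iff 1).mp hx
    refine (AddCircle.coe_eq_zero_iff 1).mpr ⟨n, ?_⟩
    rw [zsmul_one]
    exact_mod_cast (by simpa using hn : (n : ℝ) = q)

theorem exists_addMonoidHom_notMem_Tpos {A : Type*} [AddCommGroup A] {a : A} (ha : a ≠ 0) :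
    ∃ χ : A →+ Circle1, χ a ∉ Tpos := by
  obtain ⟨c, hc⟩ := CharacterModule.exists_character_apply_ne_zero_of_ne_zero ha
  have hc' : ratCircleToCircle1 (c a) ≠ 0 :=
    (map_ne_zero_iff _ ratCircleToCircle1_injective).mpr hc
  obtain ⟨n, hn⟩ := exists_nsmul_notMem_Tpos hc'
  exact ⟨n • ratCircleToCircle1.comp (c : A →+ AddCircle (1 : ℚ)), hn⟩

theorem exists_addMonoidHom_comp_subtype_eq_zero_notMem_Tpos [AddCommGroup G] (H : AddSubgroup G)
    {x : G} (hx : x ∉ H) :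
    ∃ φ : G →+ Circle1, φ.comp H.subtype = 0 ∧ φ x ∉ Tpos := by
  obtain ⟨χ, hχ⟩ := exists_addMonoidHom_notMem_Tpos (mt (QuotientAddGroup.eq_zero_iff x).mp hx)
  refine ⟨χ.comp (QuotientAddGroup.mk' H), ?_, hχ⟩
  ext h
  simp [(QuotientAddGroup.eq_zero_iff _).mpr h.2]

section Restriction

variable [AddCommGroup G] {τ : TopologicalSpace G}

theorem IsChar.comp_subtype {φ : G →+ Circle1} (hφ : IsChar τ φ) (H : AddSubgroup G) :
    IsChar (TopologicalSpace.induced Subtype.val τ) (φ.comp H.subtype) :=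
  @Continuous.comp _ _ _ (TopologicalSpace.induced Subtype.val τ) τ _ _ _ hφ continuous_induced_dom

theorem isChar_iff_isChar_comp_subtype [@IsTopologicalAddGroup G τ _] {H : AddSubgroup G}
    (hH : @IsOpen G τ H) (φ : G →+ Circle1) :
    IsChar τ φ ↔ IsChar (TopologicalSpace.induced Subtype.val τ) (φ.comp H.subtype) := by
  let _ := τ
  refine ⟨fun hφ => hφ.comp_subtype H,
    fun hφ => continuous_of_continuousAt_zero φ ?_⟩
  rw [← continuousWithinAt_iff_continuousAt (hH.mem_nhds H.zero_mem),
    continuousWithinAt_iff_continuousAt_domRestrict _ H.zero_mem]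
  exact hφ.continuousAt

theorem QuasiConvex.preimage_subtype {H : AddSubgroup G} {M : Set G} (hM : QuasiConvex τ M) :
    QuasiConvex (TopologicalSpace.induced Subtype.val τ) (Subtype.val ⁻¹' M : Set H) := by
  intro x hx
  obtain ⟨φ, hφ, hφM, hφx⟩ := hM x hx
  exact ⟨φ.comp H.subtype, hφ.comp_subtype H, fun y hy => hφM y hy, hφx⟩

theorem LocallyQuasiConvex.induced_subtype (h : LocallyQuasiConvex τ) (H : AddSubgroup G) :
    LocallyQuasiConvex (TopologicalSpace.induced (Subtype.val : H → G) τ) := by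
  intro U hU
  rw [nhds_induced] at hU
  obtain ⟨V, hV, hVU⟩ := hU
  obtain ⟨M, hM, hMqc, hMV⟩ := h V hV
  refine ⟨Subtype.val ⁻¹' M, ?_, hMqc.preimage_subtype, fun y hy => hVU (hMV hy)⟩
  rw [nhds_induced]
  exact preimage_mem_comap hM

end Restriction

namespace AddSubgroup

variable [AddCommGroup G] (H : AddSubgroup G) (ν : TopologicalSpace H)
  [@IsTopologicalAddGroup H ν _]

@[reducible] def extendTopologyBasis : AddGroupFilterBasis G :=
  let _ := ν
  { sets := {S | ∃ U ∈ 𝓝 (0 : H), S = Subtype.val '' U}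
    nonempty := ⟨_, Set.univ, univ_mem, rfl⟩
    inter_sets := by
      rintro _ _ ⟨U, hU, rfl⟩ ⟨V, hV, rfl⟩
      exact ⟨_, ⟨U ∩ V, inter_mem hU hV, rfl⟩, (Set.image_inter Subtype.val_injective).le⟩
    zero' := by
      rintro _ ⟨U, hU, rfl⟩
      exact ⟨0, mem_of_mem_nhds hU, rfl⟩
    add' := by
      rintro _ ⟨U, hU, rfl⟩
      obtain ⟨V, hV, hVU⟩ := exists_nhds_zero_half hU
      refine ⟨_, ⟨V, hV, rfl⟩, ?_⟩
      rintro _ ⟨_, ⟨v, hv, rfl⟩, _, ⟨w, hw, rfl⟩, rfl⟩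
      exact ⟨v + w, hVU v hv w hw, rfl⟩
    neg' := by
      rintro _ ⟨U, hU, rfl⟩
      refine ⟨_, ⟨-U, neg_mem_nhds_zero H hU, rfl⟩, ?_⟩
      rintro _ ⟨u, hu, rfl⟩
      exact ⟨-u, hu, rfl⟩
    conj' := by
      rintro x _ ⟨U, hU, rfl⟩
      refine ⟨_, ⟨U, hU, rfl⟩, fun y hy => ?_⟩
      simpa using hy }

/-- The topology `τ̄` on `G` in which `H` is an open subgroup carrying the topology `ν`. -/
@[reducible] def extendTopology : TopologicalSpace G :=
  (H.extendTopologyBasis ν).topology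

theorem nhds_zero_extendTopology :
    @nhds G (H.extendTopology ν) 0 = Filter.map Subtype.val (@nhds H ν 0) := by
  rw [extendTopology, AddGroupFilterBasis.nhds_zero_eq]
  ext S
  rw [FilterBasis.mem_filter_iff, Filter.mem_map]
  constructor
  · rintro ⟨_, ⟨U, hU, rfl⟩, hUS⟩
    exact mem_of_superset hU (Set.image_subset_iff.mp hUS)
  · exact fun hS => ⟨_, ⟨_, hS, rfl⟩, Set.image_preimage_subset _ _⟩

theorem isTopologicalAddGroup_extendTopology :
    @IsTopologicalAddGroup G (H.extendTopology ν) _ :=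
  AddGroupFilterBasis.isTopologicalAddGroup _

theorem isOpen_extendTopology : @IsOpen G (H.extendTopology ν) H := by
  let _ := H.extendTopology ν
  have := H.isTopologicalAddGroup_extendTopology ν
  refine H.isOpen_of_mem_nhds (g := 0) ?_
  rw [nhds_zero_extendTopology, Filter.mem_map]
  exact univ_mem' fun x => x.2

theorem induced_extendTopology :
    TopologicalSpace.induced Subtype.val (H.extendTopology ν) = ν := by
  let _ := H.extendTopology ν
  have := H.isTopologicalAddGroup_extendTopology ν
  refine IsTopologicalAddGroup.ext (topologicalAddGroup_induced H.subtype) ‹_› ?_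
  rw [nhds_induced, ZeroMemClass.coe_zero, nhds_zero_extendTopology,
    comap_map Subtype.val_injective]

theorem isChar_extendTopology_iff (φ : G →+ Circle1) :
    IsChar (H.extendTopology ν) φ ↔ IsChar ν (φ.comp H.subtype) := by
  have := H.isTopologicalAddGroup_extendTopology ν
  rw [isChar_iff_isChar_comp_subtype (H.isOpen_extendTopology ν), induced_extendTopology]

end AddSubgroup

section Extension

variable [AddCommGroup G] {H : AddSubgroup G} {ν : TopologicalSpace H}
  [@IsTopologicalAddGroup H ν _]

theorem QuasiConvex.image_extendTopology {M : Set H} (hM : QuasiConvex ν M) :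
    QuasiConvex (H.extendTopology ν) (Subtype.val '' M) := by
  intro x hx
  by_cases hxH : x ∈ H
  · obtain ⟨χ, hχ, hχM, hχx⟩ := hM ⟨x, hxH⟩ fun hxM => hx ⟨_, hxM, rfl⟩
    obtain ⟨φ, rfl⟩ := (Module.Baer.of_divisible Circle1).extension_property_addMonoidHom
      H.subtype Subtype.val_injective χ
    refine ⟨φ, (H.isChar_extendTopology_iff ν φ).mpr hχ, ?_, hχx⟩
    rintro _ ⟨m, hm, rfl⟩
    exact hχM m hm
  · obtain ⟨φ, hφH, hφx⟩ := exists_addMonoidHom_comp_subtype_eq_zero_notMem_Tpos H hxH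
    refine ⟨φ, (H.isChar_extendTopology_iff ν φ).mpr ?_, ?_, hφx⟩
    · rw [hφH]
      exact @continuous_const _ _ ν _ 0
    · rintro _ ⟨m, -, rfl⟩
      rw [show φ m = 0 from DFunLike.congr_fun hφH m]
      exact zero_mem_Tpos

theorem LocallyQuasiConvex.extendTopology (h : LocallyQuasiConvex ν) :
    LocallyQuasiConvex (H.extendTopology ν) := by
  intro U hU
  rw [H.nhds_zero_extendTopology ν, Filter.mem_map] at hU
  obtain ⟨M, hM, hMqc, hMU⟩ := h _ hU
  refine ⟨Subtype.val '' M, ?_, hMqc.image_extendTopology, Set.image_subset_iff.mpr hMU⟩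
  rw [H.nhds_zero_extendTopology ν]
  exact image_mem_map hM

end Extension

theorem stmt10 {G : Type*} [AddCommGroup G] (τ : TopologicalSpace G)
    (H : AddSubgroup G) (hopen : @IsOpen G τ (H : Set G)) (hM : IsMackey τ) :
    IsMackey (TopologicalSpace.induced (Subtype.val : H → G) τ) := by
  let _ := τ
  obtain ⟨hτ, hτlqc, hτmax⟩ := hM
  refine ⟨topologicalAddGroup_induced H.subtype, hτlqc.induced_subtype H,
    fun ν hν hνlqc hντ => ?_⟩
  have hτν : τ ≤ H.extendTopology ν := by
    refine hτmax _ (H.isTopologicalAddGroup_extendTopology ν) hνlqc.extendTopology fun φ => ?_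
    rw [isChar_iff_isChar_comp_subtype hopen, H.isChar_extendTopology_iff]
    exact hντ _
  calc TopologicalSpace.induced Subtype.val τ
      ≤ TopologicalSpace.induced Subtype.val (H.extendTopology ν) := induced_mono hτν
    _ = ν := H.induced_extendTopology ν
end
end
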